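/- Let A be a finite-dimensional algebra over a field which is n-Iwanaga-Gorenstein, i.e. the injective dimension of A as a left A-module and the projective dimension of D(A) as a left A-module are both at most n. Then for every finitely generated A-module M, the n-th syzygy Ω^n(M) is Gorenstein projective, i.e. Ext^i_A(Ω^n(M), A) = 0 for all i > 0. -/

import Mathlib

open CategoryTheory

noncomputable section

/-- Vanishing of the `n`-th Ext group of two `A`-modules. -/
def ExtVanish (A : Type) [Ring A] (n : ℕ) (X Y : ModuleCat.{0} A) : Prop :=
  Limits.IsZero (((Ext ℤ (ModuleCat.{0} A) n).obj (Opposite.op X)).obj Y)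

/-- `M` belongs to `add X`: it is a direct summand of a finite direct sum of copies of `X`. -/
def InAdd (A : Type) [Ring A] (X M : ModuleCat.{0} A) : Prop :=
  ∃ (n : ℕ) (i : M →ₗ[A] (Fin n → X)) (p : (Fin n → X) →ₗ[A] M),
    p.comp i = LinearMap.id

/-- `N` is a (first) syzygy of `M`: there is an exact sequence `0 → N → P → M → 0`
with `P` projective. -/
def IsSyzygyOf (A : Type) [Ring A] (N M : ModuleCat.{0} A) : Prop :=
  ∃ (P : ModuleCat.{0} A), Module.Projective A P ∧
    ∃ (ι : N →ₗ[A] P) (π : P →ₗ[A] M),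
      Function.Injective ι ∧ Function.Surjective π ∧ Function.Exact ι π

/-- `N` is an `n`-th syzygy of `M`. -/
def IsNthSyzygyOf (A : Type) [Ring A] : ℕ → ModuleCat.{0} A → ModuleCat.{0} A → Prop
  | 0, N, M => Nonempty (N ≅ M)
  | n + 1, N, M => ∃ K : ModuleCat.{0} A, IsSyzygyOf A K M ∧ IsNthSyzygyOf A n N K

/-- `N` is a (first) cosyzygy of `M`: there is an exact sequence `0 → M → I → N → 0`
with `I` injective. -/
def IsCosyzygyOf (A : Type) [Ring A] (N M : ModuleCat.{0} A) : Prop :=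
  ∃ (I : ModuleCat.{0} A), Module.Injective A I ∧
    ∃ (ι : M →ₗ[A] I) (π : I →ₗ[A] N),
      Function.Injective ι ∧ Function.Surjective π ∧ Function.Exact ι π

/-- `N` is an `n`-th cosyzygy of `M`. -/
def IsNthCosyzygyOf (A : Type) [Ring A] : ℕ → ModuleCat.{0} A → ModuleCat.{0} A → Prop
  | 0, N, M => Nonempty (N ≅ M)
  | n + 1, N, M => ∃ K : ModuleCat.{0} A, IsCosyzygyOf A K M ∧ IsNthCosyzygyOf A n N K

/-- The projective dimension of `M` is at most `n`. -/
def ProjDimLE (A : Type) [Ring A] (n : ℕ) (M : ModuleCat.{0} A) : Prop :=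
  ∃ K : ModuleCat.{0} A, IsNthSyzygyOf A n K M ∧ Module.Projective A K

/-- The injective dimension of `M` is at most `n`. -/
def InjDimLE (A : Type) [Ring A] (n : ℕ) (M : ModuleCat.{0} A) : Prop :=
  ∃ K : ModuleCat.{0} A, IsNthCosyzygyOf A n K M ∧ Module.Injective A K

/-- The underlying type of `D(A) = Hom_k(A, k)`. -/
def DualMod (k A : Type) [Field k] [Ring A] [Algebra k A] : Type := A →ₗ[k] k

instance (k A : Type) [Field k] [Ring A] [Algebra k A] : AddCommGroup (DualMod k A) :=
  inferInstanceAs (AddCommGroup (A →ₗ[k] k))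

/-- Auxiliary scalar action for `DualMod`. -/
def dualSMul (k A : Type) [Field k] [Ring A] [Algebra k A] (a : A) (φ : A →ₗ[k] k) :
    A →ₗ[k] k := φ.comp (LinearMap.mulRight k a)

/-- The left `A`-module structure on `D(A)`: `(a • φ) x = φ (x * a)`. -/
instance (k A : Type) [Field k] [Ring A] [Algebra k A] : Module A (DualMod k A) where
  smul a φ := dualSMul k A a φ
  one_smul φ := by
    show dualSMul k A 1 φ = φ
    unfold dualSMul; ext x; simp [LinearMap.mulRight]; rfl
  mul_smul a b φ := by
    show dualSMul k A (a * b) φ = dualSMul k A a (dualSMul k A b φ)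
    unfold dualSMul; ext x; simp [LinearMap.mulRight, mul_assoc]
    exact congrArg (show A →ₗ[k] k from φ) (mul_assoc x a b).symm
  smul_zero a := by
    show dualSMul k A a 0 = 0
    unfold dualSMul; ext x; simp
  smul_add a φ ψ := by
    show dualSMul k A a (φ + ψ) = dualSMul k A a φ + dualSMul k A a ψ
    unfold dualSMul; ext x; rfl
  add_smul a b φ := by
    show dualSMul k A (a + b) φ = dualSMul k A a φ + dualSMul k A b φ
    unfold dualSMul; ext x; simp [LinearMap.mulRight, mul_add]
    exact map_add (show A →ₗ[k] k from φ) (x * a) (x * b)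
  zero_smul φ := by
    show dualSMul k A 0 φ = 0
    unfold dualSMul; ext x; simp [LinearMap.mulRight]
    exact map_zero (show A →ₗ[k] k from φ)

/-- `D(A)`, the dual of the right regular module, as an object of `ModuleCat A`. -/
def DualA (k A : Type) [Field k] [Ring A] [Algebra k A] : ModuleCat.{0} A :=
  ModuleCat.of A (DualMod k A)

/-- The idempotent ideal `⟨e⟩ = AeA`, as a left submodule of `A`. -/
def idemIdeal (A : Type) [Ring A] (e : A) : Submodule A A :=
  Submodule.span A (Set.range fun b : A => e * b)

/-- The quotient `A/⟨e⟩` as a left `A`-module. -/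
def quotMod (A : Type) [Ring A] (e : A) : ModuleCat.{0} A :=
  ModuleCat.of A (A ⧸ idemIdeal A e)

/-- The left ideal `Ae = {x | x * e = x}` (for `e` idempotent), as a submodule of `A`. -/
def leftPart (A : Type) [Ring A] (e : A) : Submodule A A where
  carrier := {x | x * e = x}
  add_mem' := by intro a b ha hb; simp only [Set.mem_setOf_eq] at *; rw [add_mul, ha, hb]
  zero_mem' := by simp
  smul_mem' := by intro c x hx; simp only [Set.mem_setOf_eq, smul_eq_mul] at *;
                  rw [mul_assoc, hx]

/-- `Ae` as an object of `ModuleCat A`. -/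
def AeMod (A : Type) [Ring A] (e : A) : ModuleCat.{0} A :=
  ModuleCat.of A (leftPart A e)

/-- `M` is Gorenstein projective: `Ext^i_A(M, A) = 0` for all `i > 0`. -/
def IsGorensteinProjective (A : Type) [Ring A] (M : ModuleCat.{0} A) : Prop :=
  ∀ i : ℕ, 0 < i → ExtVanish A i M (ModuleCat.of A A)

/-- `M` is Gorenstein injective: `Ext^i_A(D(A), M) = 0` for all `i > 0`. -/
def IsGorensteinInjective (k A : Type) [Field k] [Ring A] [Algebra k A]
    (M : ModuleCat.{0} A) : Prop :=
  ∀ i : ℕ, 0 < i → ExtVanish A i (DualA k A) M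

/-- `M ∈ gen_l(Ae)`: `M` has a projective resolution whose terms in degrees `≤ l`
lie in `add (Ae)`. -/
def GenLE (A : Type) [Ring A] (e : A) (l : ℕ) (M : ModuleCat.{0} A) : Prop :=
  ∃ (P : ℕ → ModuleCat.{0} A) (d : ∀ n : ℕ, (P (n + 1) →ₗ[A] P n)) (π : P 0 →ₗ[A] M),
    (∀ n, Module.Projective A (P n)) ∧
    Function.Surjective π ∧
    Function.Exact (d 0) π ∧
    (∀ n, Function.Exact (d (n + 1)) (d n)) ∧
    (∀ n ≤ l, InAdd A (AeMod A e) (P n))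

/-!
Dimension shifting. If `0 → N → P → K → 0` is exact with `P` projective, splicing a projective
resolution of `N` with `P` gives one of `K`, so for `i > 0` the vanishing of `Ext^(i+1)(K, -)`
implies that of `Ext^i(N, -)`. Dually, if `0 → Y → I → K → 0` is exact with `I` injective, the
long exact sequence of Hom complexes shows that `Ext^j(-, K) = 0` implies `Ext^(j+1)(-, Y) = 0`.
Hence for an `n`-th syzygy `N` of `M` and `i > 0`, `Ext^i(N, A)` vanishes as soon as
`Ext^(i+n)(M, A)` does, and that holds because `A` has an injective `n`-th cosyzygy.
-/

open CategoryTheory Limits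

namespace CategoryTheory.ProjectiveResolution

variable {C : Type*} [Category C] [Abelian C] {S : ShortComplex C} (Q : ProjectiveResolution S.X₁)

def spliceComplex : ChainComplex C ℕ :=
  Q.complex.augment ((Q.complex.toSingle₀Equiv _ Q.π).1 ≫ S.f)
    (by rw [reassoc_of% (Q.complex.toSingle₀Equiv _ Q.π).2, zero_comp])

def spliceπ : Q.spliceComplex ⟶ (ChainComplex.single₀ C).obj S.X₃ :=
  (ChainComplex.toSingle₀Equiv _ _).symm ⟨S.g,
    (Category.assoc _ _ _).trans ((congrArg _ S.zero).trans comp_zero)⟩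

lemma spliceπ_f_zero : Q.spliceπ.f 0 = S.g :=
  ChainComplex.toSingle₀Equiv_symm_apply_f_zero _ _

def spliceShortExact (hS : S.ShortExact) [Projective S.X₂] : ProjectiveResolution S.X₃ where
  complex := Q.spliceComplex
  projective
    | 0 => (inferInstance : Projective S.X₂)
    | n + 1 => Q.projective n
  π := Q.spliceπ
  quasiIso := ⟨fun n => by
    have : Mono S.f := hS.mono_f
    let ε := (Q.complex.toSingle₀Equiv _ Q.π).1
    have : Epi ε := inferInstanceAs (Epi (Q.π.f 0))
    cases n with
    | zero =>
      rw [ChainComplex.quasiIsoAt₀_iff, ShortComplex.quasiIso_iff_of_zeros' _ rfl rfl rfl]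
      -- `Q.spliceπ.f 0` is `S.g` only up to `spliceπ_f_zero`, hence the detour through `S'`
      let S' := ShortComplex.mk (ε ≫ S.f) S.g
        ((Category.assoc _ _ _).trans ((congrArg _ S.zero).trans comp_zero))
      refine (ShortComplex.exact_and_epi_g_iff_of_iso (S₂ := S') ?_).2 ⟨?_, hS.epi_g⟩
      · exact ShortComplex.isoMk (Iso.refl _) (Iso.refl _) (Iso.refl _)
          ((Category.id_comp _).trans (Category.comp_id _).symm)
          ((Category.id_comp _).trans ((spliceπ_f_zero Q).symm.trans (Category.comp_id _).symm))
      exact (ShortComplex.exact_iff_of_epi_of_isIso_of_mono (S₁ := S') (S₂ := S)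
        { τ₁ := ε, τ₂ := 𝟙 _, τ₃ := 𝟙 _ }).2 hS.exact
    | succ n =>
      rw [quasiIsoAt_iff_exactAt' _ _ (ChainComplex.exactAt_succ_single_obj _ _),
        HomologicalComplex.exactAt_iff' _ (n + 2) (n + 1) n (by simp) (by simp)]
      cases n with
      | zero =>
        exact (ShortComplex.exact_iff_of_epi_of_isIso_of_mono
          (S₁ := ShortComplex.mk _ _ (Q.complex.toSingle₀Equiv _ Q.π).2)
          (S₂ := ShortComplex.mk (Q.complex.d 1 0) (ε ≫ S.f)
            (by rw [reassoc_of% (Q.complex.toSingle₀Equiv _ Q.π).2, zero_comp]))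
          { τ₁ := 𝟙 _, τ₂ := 𝟙 _, τ₃ := S.f }).1 Q.exact₀
      | succ m => exact Q.exact_succ m⟩

end CategoryTheory.ProjectiveResolution

namespace ChainComplex

variable {C : Type*} [Category C] [Abelian C] (R : Type*) [Ring R] [Linear R C]
  (K : ChainComplex C ℕ)

def linearYonedaObjMap {Y Z : C} (φ : Y ⟶ Z) : K.linearYonedaObj R Y ⟶ K.linearYonedaObj R Z where
  f i := ((linearYoneda R C).map φ).app (Opposite.op (K.X i))
  comm' i j _ := by
    ext (g : K.X i ⟶ Y)
    exact (Category.assoc (K.d j i) g φ).symm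

lemma linearYonedaObj_exactAt_succ_iff (Y : C) (m : ℕ) :
    (K.linearYonedaObj R Y).ExactAt (m + 1) ↔
      ∀ f : K.X (m + 1) ⟶ Y, K.d (m + 2) (m + 1) ≫ f = 0 →
        ∃ g : K.X m ⟶ Y, K.d (m + 1) m ≫ g = f := by
  rw [HomologicalComplex.exactAt_iff' _ m (m + 1) (m + 2) (by simp) (by simp),
    ShortComplex.moduleCat_exact_iff]
  rfl

lemma shortExact_linearYonedaObjMap [∀ i, Projective (K.X i)] {S : ShortComplex C}
    (hS : S.ShortExact) :
    (ShortComplex.mk (K.linearYonedaObjMap R S.f) (K.linearYonedaObjMap R S.g) (by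
      ext i (g : K.X i ⟶ S.X₁)
      exact (Category.assoc g S.f S.g).trans ((congrArg _ S.zero).trans comp_zero))).ShortExact := by
  have := hS.mono_f
  have := hS.epi_g
  rw [HomologicalComplex.shortExact_iff_degreewise_shortExact]
  intro i
  refine ShortComplex.ShortExact.mk' ?_ ?_ ?_
  · rw [ShortComplex.moduleCat_exact_iff]
    intro (g : K.X i ⟶ S.X₂) (hg : g ≫ S.g = 0)
    exact ⟨hS.exact.lift g hg, hS.exact.lift_f g hg⟩
  · rw [ModuleCat.mono_iff_injective]
    intro (g₁ : K.X i ⟶ S.X₁) (g₂ : K.X i ⟶ S.X₁) (h : g₁ ≫ S.f = g₂ ≫ S.f)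
    exact (cancel_mono S.f).1 h
  · rw [ModuleCat.epi_iff_surjective]
    intro (g : K.X i ⟶ S.X₃)
    exact ⟨Projective.factorThru g S.g, Projective.factorThru_comp g S.g⟩

end ChainComplex

section ExtVanish

variable {A : Type} [Ring A]

lemma extVanish_iff_exactAt {X : ModuleCat.{0} A} (P : ProjectiveResolution X)
    (Y : ModuleCat.{0} A) (i : ℕ) :
    ExtVanish A i X Y ↔ (P.complex.linearYonedaObj ℤ Y).ExactAt i := by
  rw [HomologicalComplex.exactAt_iff_isZero_homology]
  exact (P.isoExt i Y).isZero_iff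

lemma ExtVanish.of_iso_left {N M Y : ModuleCat.{0} A} {i : ℕ} (h : ExtVanish A i M Y)
    (e : N ≅ M) : ExtVanish A i N Y :=
  h.of_iso (((Ext ℤ (ModuleCat.{0} A) i).mapIso e.op).app Y).symm

lemma ExtVanish.of_iso_right {X Y Z : ModuleCat.{0} A} {i : ℕ} (h : ExtVanish A i X Z)
    (e : Y ≅ Z) : ExtVanish A i X Y :=
  h.of_iso (((Ext ℤ (ModuleCat.{0} A) i).obj (Opposite.op X)).mapIso e)

lemma extVanish_of_injective (X : ModuleCat.{0} A) {I : ModuleCat.{0} A} [Injective I] {i : ℕ}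
    (hi : 0 < i) : ExtVanish A i X I := by
  obtain ⟨m, rfl⟩ : ∃ m, i = m + 1 := ⟨i - 1, by omega⟩
  let P := ProjectiveResolution.of X
  rw [extVanish_iff_exactAt P, ChainComplex.linearYonedaObj_exactAt_succ_iff]
  intro f hf
  exact ⟨(P.exact_succ m).descToInjective f hf, (P.exact_succ m).comp_descToInjective f hf⟩

lemma ExtVanish.succ_of_shortExact {S : ShortComplex (ModuleCat.{0} A)} (hS : S.ShortExact)
    [Injective S.X₂] {X : ModuleCat.{0} A} {j : ℕ} (h : ExtVanish A j X S.X₃) :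
    ExtVanish A (j + 1) X S.X₁ := by
  let P := ProjectiveResolution.of X
  rw [extVanish_iff_exactAt P, HomologicalComplex.exactAt_iff_isZero_homology] at h ⊢
  have hI : IsZero ((P.complex.linearYonedaObj ℤ S.X₂).homology (j + 1)) := by
    rw [← HomologicalComplex.exactAt_iff_isZero_homology, ← extVanish_iff_exactAt P]
    exact extVanish_of_injective X j.succ_pos
  exact ((P.complex.shortExact_linearYonedaObjMap ℤ hS).homology_exact₁ j (j + 1)
    (by simp)).isZero_X₂ (h.eq_of_src _ _) (hI.eq_of_tgt _ _)

lemma ExtVanish.of_shortExact {S : ShortComplex (ModuleCat.{0} A)} (hS : S.ShortExact)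
    [Projective S.X₂] {Y : ModuleCat.{0} A} {i : ℕ} (hi : 0 < i) (h : ExtVanish A (i + 1) S.X₃ Y) :
    ExtVanish A i S.X₁ Y := by
  obtain ⟨m, rfl⟩ : ∃ m, i = m + 1 := ⟨i - 1, by omega⟩
  let Q := ProjectiveResolution.of S.X₁
  rw [extVanish_iff_exactAt (Q.spliceShortExact hS),
    ChainComplex.linearYonedaObj_exactAt_succ_iff] at h
  rw [extVanish_iff_exactAt Q, ChainComplex.linearYonedaObj_exactAt_succ_iff]
  -- in degrees `≥ 1` the spliced resolution is `Q` shifted by one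
  exact h

lemma ExtVanish.succ_of_isCosyzygyOf {X Y K : ModuleCat.{0} A} (hK : IsCosyzygyOf A K Y) {j : ℕ}
    (h : ExtVanish A j X K) : ExtVanish A (j + 1) X Y := by
  obtain ⟨I, hI, ι, π, hι, hπ, hexact⟩ := hK
  let S := ShortComplex.moduleCatMk ι π hexact.linearMap_comp_eq_zero
  have : Injective S.X₂ := Module.injective_object_of_injective_module (inj := hI)
  exact ExtVanish.succ_of_shortExact (S := S) (ModuleCat.shortComplex_shortExact _ hexact hι hπ) h

lemma ExtVanish.of_isSyzygyOf {N K Y : ModuleCat.{0} A} (hN : IsSyzygyOf A N K) {i : ℕ}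
    (hi : 0 < i) (h : ExtVanish A (i + 1) K Y) : ExtVanish A i N Y := by
  obtain ⟨P, hP, ι, π, hι, hπ, hexact⟩ := hN
  let S := ShortComplex.moduleCatMk ι π hexact.linearMap_comp_eq_zero
  have : Projective S.X₂ := (IsProjective.iff_projective P).1 hP
  exact ExtVanish.of_shortExact (S := S) (ModuleCat.shortComplex_shortExact _ hexact hι hπ) hi h

lemma extVanish_of_isNthCosyzygyOf {n : ℕ} {K Y : ModuleCat.{0} A} (hK : IsNthCosyzygyOf A n K Y)
    [Injective K] (X : ModuleCat.{0} A) {i : ℕ} (hi : n < i) : ExtVanish A i X Y := by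
  induction n generalizing Y i with
  | zero => exact (extVanish_of_injective X hi).of_iso_right hK.some.symm
  | succ n ih =>
    obtain ⟨K', hK', hK⟩ := hK
    obtain ⟨j, rfl⟩ : ∃ j, i = j + 1 := ⟨i - 1, by omega⟩
    exact (ih hK (by omega)).succ_of_isCosyzygyOf hK'

lemma InjDimLE.extVanish {n : ℕ} {Y : ModuleCat.{0} A} (h : InjDimLE A n Y) (X : ModuleCat.{0} A)
    {i : ℕ} (hi : n < i) : ExtVanish A i X Y := by
  obtain ⟨K, hK, hinj⟩ := h
  have : Injective K := Module.injective_object_of_injective_module (inj := hinj)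
  exact extVanish_of_isNthCosyzygyOf hK X hi

lemma ExtVanish.of_isNthSyzygyOf {n : ℕ} {N M Y : ModuleCat.{0} A} (hN : IsNthSyzygyOf A n N M)
    {i : ℕ} (hi : 0 < i) (h : ExtVanish A (i + n) M Y) : ExtVanish A i N Y := by
  induction n generalizing M with
  | zero => exact h.of_iso_left hN.some
  | succ n ih =>
    obtain ⟨K, hK, hN⟩ := hN
    exact ih hN (h.of_isSyzygyOf hK (by omega))

end ExtVanish

theorem stmt_6_general (A : Type) [Ring A]
    (n : ℕ)
    (hinj : InjDimLE A n (ModuleCat.of A A)) :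
    ∀ (M N : ModuleCat.{0} A), Module.Finite A M →
      IsNthSyzygyOf A n N M → IsGorensteinProjective A N := by
  intro M N _ hN i hi
  exact (hinj.extVanish M (by omega)).of_isNthSyzygyOf hN hi

/-- Over an `n`-Iwanaga-Gorenstein algebra, `n`-th syzygies of
finitely generated modules are Gorenstein projective. -/
theorem stmt_6 (k A : Type) [Field k] [Ring A] [Algebra k A] [FiniteDimensional k A]
    (n : ℕ)
    (hinj : InjDimLE A n (ModuleCat.of A A))
    (hproj : ProjDimLE A n (DualA k A)) :
    ∀ (M N : ModuleCat.{0} A), Module.Finite A M →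
      IsNthSyzygyOf A n N M → IsGorensteinProjective A N :=
  stmt_6_general A n hinj

end
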